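/- Let p_d, p_c, p_cd be reals with 0 ≤ p_cd ≤ p_c ≤ p_d ≤ 1, p_c + p_d − p_cd ≤ 1, and p_cd > p_d − p_c (Regime 2). Let M, N be positive integers with N ≤ M and 3N > 2M, write M = 3k + q with k = ⌊M/3⌋ and q ∈ {0,1,2}, set A := k − (M−N), and assume (3N−2M)·p_cd > (2N−M)·(p_d − p_c). Define f(a) := min( 2·(⟨N, M−N, N⟩ − a·A·⟨1,−1,1⟩), ⟨2M−N, M, M⟩ + a·A·⟨1,0,0⟩ ) for a ∈ [0,1]. Then: (i) if q·p_cd ≤ (k+q)·(p_d − p_c), the maximum of f over [0,1] equals M·( ⟨1,1,1⟩ + p_cd·⟨1,−1,1⟩/⟨3,−2,2⟩ ), attained at a = ⟨3N−2M, M−2N, 2N−M⟩ / (A·⟨3,−2,2⟩); (ii) if q·p_cd > (k+q)·(p_d − p_c), the maximum of f over [0,1] equals M·⟨1,1,1⟩ + k·p_cd, attained at a = 1. (This is Proposition 2, establishing the lower bound η_lb,2 of Theorem 3.) -/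
import Mathlib


/-- The η-triple ⟨a,b,c⟩ = a·p_cd + b·(p_d − p_cd) + c·(p_c − p_cd). -/
noncomputable def etaTriple (p_d p_c p_cd a b c : ℝ) : ℝ :=
  a * p_cd + b * (p_d - p_cd) + c * (p_c - p_cd)

/-- Achievable total DoF of the blended HKIA scheme (power exponent b = 1)
on the Type II channel, as a function of the power exponent a. -/
noncomputable def hkiaTypeII (p_d p_c p_cd M N A a : ℝ) : ℝ :=
  min (2 * (etaTriple p_d p_c p_cd N (M - N) N - a * A * etaTriple p_d p_c p_cd 1 (-1) 1))
      (etaTriple p_d p_c p_cd (2*M - N) M M + a * A * etaTriple p_d p_c p_cd 1 0 0)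

private lemma min_eq_of_eq {x y v : ℝ} (hx : x = v) (hy : y = v) : min x y = v := by
  rw [hx, hy, min_self]

/-- Proposition 2: optimal power tuning and achievable sum DoF of the blended
HKIA scheme on the Type II bursty MIMO X channel in Regime 2. -/
theorem hkia_typeII_optimum (p_d p_c p_cd : ℝ) (M N k q : ℕ)
    (h0 : 0 ≤ p_cd) (h1 : p_cd ≤ p_c) (h2 : p_c ≤ p_d) (h3 : p_d ≤ 1)
    (h4 : p_c + p_d - p_cd ≤ 1) (hreg2 : p_d - p_c < p_cd)
    (hM : 0 < M) (hN : 0 < N) (hNM : N ≤ M) (h23 : 2*M < 3*N)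
    (hkq : M = 3*k + q) (hq : q < 3)
    (hcond : (2*(N:ℝ) - M) * (p_d - p_c) < (3*(N:ℝ) - 2*M) * p_cd) :
    ((q:ℝ) * p_cd ≤ ((k:ℝ) + q) * (p_d - p_c) →
      letI A : ℝ := (k:ℝ) - ((M:ℝ) - N)
      letI a₀ : ℝ := etaTriple p_d p_c p_cd (3*(N:ℝ) - 2*M) ((M:ℝ) - 2*N) (2*(N:ℝ) - M) /
        (A * etaTriple p_d p_c p_cd 3 (-2) 2)
      a₀ ∈ Set.Icc (0:ℝ) 1 ∧
      hkiaTypeII p_d p_c p_cd M N A a₀ =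
        (M:ℝ) * (etaTriple p_d p_c p_cd 1 1 1 +
          p_cd * etaTriple p_d p_c p_cd 1 (-1) 1 / etaTriple p_d p_c p_cd 3 (-2) 2) ∧
      ∀ a ∈ Set.Icc (0:ℝ) 1,
        hkiaTypeII p_d p_c p_cd M N A a ≤ hkiaTypeII p_d p_c p_cd M N A a₀) ∧
    (((k:ℝ) + q) * (p_d - p_c) < (q:ℝ) * p_cd →
      letI A : ℝ := (k:ℝ) - ((M:ℝ) - N)
      hkiaTypeII p_d p_c p_cd M N A 1 =
        (M:ℝ) * etaTriple p_d p_c p_cd 1 1 1 + (k:ℝ) * p_cd ∧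
      ∀ a ∈ Set.Icc (0:ℝ) 1,
        hkiaTypeII p_d p_c p_cd M N A a ≤ hkiaTypeII p_d p_c p_cd M N A 1) := by
  have hq2 : q ≤ 2 := by omega
  have hMkN : M ≤ k + N := by omega
  have hMr : (M:ℝ) = 3*(k:ℝ) + (q:ℝ) := by exact_mod_cast hkq
  have hA0 : (0:ℝ) ≤ ((k:ℝ) - ((M:ℝ) - (N:ℝ))) := by
    have h : (M:ℝ) ≤ (k:ℝ) + (N:ℝ) := by exact_mod_cast hMkN
    linarith
  have hE5pos : (0:ℝ) < etaTriple p_d p_c p_cd 3 (-2) 2 := by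
    simp only [etaTriple]; linarith
  have hNUMpos : (0:ℝ) < etaTriple p_d p_c p_cd (3*(N:ℝ) - 2*(M:ℝ)) ((M:ℝ) - 2*(N:ℝ)) (2*(N:ℝ) - (M:ℝ)) := by
    simp only [etaTriple]; nlinarith [hcond]
  have hkey : ((k:ℝ) - ((M:ℝ) - (N:ℝ))) * (etaTriple p_d p_c p_cd 3 (-2) 2) - (etaTriple p_d p_c p_cd (3*(N:ℝ) - 2*(M:ℝ)) ((M:ℝ) - 2*(N:ℝ)) (2*(N:ℝ) - (M:ℝ)))
      = ((k:ℝ) + (q:ℝ)) * (p_d - p_c) - (q:ℝ) * p_cd := by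
    simp only [etaTriple]; rw [hMr]; ring
  have hE2nn : (0:ℝ) ≤ etaTriple p_d p_c p_cd 1 (-1) 1 := by
    simp only [etaTriple]; linarith
  have hE40nn : (0:ℝ) ≤ etaTriple p_d p_c p_cd 1 0 0 := by
    simp only [etaTriple]; linarith
  have r1 : etaTriple p_d p_c p_cd (3*(N:ℝ) - 2*(M:ℝ)) ((M:ℝ) - 2*(N:ℝ)) (2*(N:ℝ) - (M:ℝ)) = 2 * (etaTriple p_d p_c p_cd (N:ℝ) ((M:ℝ) - (N:ℝ)) (N:ℝ)) - (etaTriple p_d p_c p_cd (2*(M:ℝ) - (N:ℝ)) (M:ℝ) (M:ℝ)) := by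
    simp only [etaTriple]; ring
  constructor
  · intro hc
    have hle : (etaTriple p_d p_c p_cd (3*(N:ℝ) - 2*(M:ℝ)) ((M:ℝ) - 2*(N:ℝ)) (2*(N:ℝ) - (M:ℝ))) ≤ ((k:ℝ) - ((M:ℝ) - (N:ℝ))) * (etaTriple p_d p_c p_cd 3 (-2) 2) := by linarith [hkey, hc]
    have hApos : (0:ℝ) < ((k:ℝ) - ((M:ℝ) - (N:ℝ))) := by
      rcases hA0.lt_or_eq with h | h
      · exact h
      · exfalso; rw [← h, zero_mul] at hle; linarith [hNUMpos]
    have hden : (0:ℝ) < ((k:ℝ) - ((M:ℝ) - (N:ℝ))) * (etaTriple p_d p_c p_cd 3 (-2) 2) := mul_pos hApos hE5pos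
    have hd0 : (0:ℝ) ≤ ((etaTriple p_d p_c p_cd (3*(N:ℝ) - 2*(M:ℝ)) ((M:ℝ) - 2*(N:ℝ)) (2*(N:ℝ) - (M:ℝ))) / (((k:ℝ) - ((M:ℝ) - (N:ℝ))) * (etaTriple p_d p_c p_cd 3 (-2) 2))) := div_nonneg hNUMpos.le hden.le
    have hd1 : ((etaTriple p_d p_c p_cd (3*(N:ℝ) - 2*(M:ℝ)) ((M:ℝ) - 2*(N:ℝ)) (2*(N:ℝ) - (M:ℝ))) / (((k:ℝ) - ((M:ℝ) - (N:ℝ))) * (etaTriple p_d p_c p_cd 3 (-2) 2))) ≤ 1 := (div_le_one hden).mpr hle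
    have hdA : ((etaTriple p_d p_c p_cd (3*(N:ℝ) - 2*(M:ℝ)) ((M:ℝ) - 2*(N:ℝ)) (2*(N:ℝ) - (M:ℝ))) / (((k:ℝ) - ((M:ℝ) - (N:ℝ))) * (etaTriple p_d p_c p_cd 3 (-2) 2))) * ((k:ℝ) - ((M:ℝ) - (N:ℝ))) * (etaTriple p_d p_c p_cd 3 (-2) 2) = etaTriple p_d p_c p_cd (3*(N:ℝ) - 2*(M:ℝ)) ((M:ℝ) - 2*(N:ℝ)) (2*(N:ℝ) - (M:ℝ)) := by
      rw [mul_assoc]; exact div_mul_cancel₀ _ hden.ne'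
    have hdiv : ((etaTriple p_d p_c p_cd (3*(N:ℝ) - 2*(M:ℝ)) ((M:ℝ) - 2*(N:ℝ)) (2*(N:ℝ) - (M:ℝ))) / (((k:ℝ) - ((M:ℝ) - (N:ℝ))) * (etaTriple p_d p_c p_cd 3 (-2) 2))) * ((k:ℝ) - ((M:ℝ) - (N:ℝ))) = (etaTriple p_d p_c p_cd (3*(N:ℝ) - 2*(M:ℝ)) ((M:ℝ) - 2*(N:ℝ)) (2*(N:ℝ) - (M:ℝ))) / (etaTriple p_d p_c p_cd 3 (-2) 2) :=
      (eq_div_iff hE5pos.ne').mpr hdA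
    have r2d : ((etaTriple p_d p_c p_cd (3*(N:ℝ) - 2*(M:ℝ)) ((M:ℝ) - 2*(N:ℝ)) (2*(N:ℝ) - (M:ℝ))) / (((k:ℝ) - ((M:ℝ) - (N:ℝ))) * (etaTriple p_d p_c p_cd 3 (-2) 2))) * ((k:ℝ) - ((M:ℝ) - (N:ℝ))) * (etaTriple p_d p_c p_cd 3 (-2) 2) = 2 * (((etaTriple p_d p_c p_cd (3*(N:ℝ) - 2*(M:ℝ)) ((M:ℝ) - 2*(N:ℝ)) (2*(N:ℝ) - (M:ℝ))) / (((k:ℝ) - ((M:ℝ) - (N:ℝ))) * (etaTriple p_d p_c p_cd 3 (-2) 2))) * ((k:ℝ) - ((M:ℝ) - (N:ℝ))) * (etaTriple p_d p_c p_cd 1 (-1) 1)) + ((etaTriple p_d p_c p_cd (3*(N:ℝ) - 2*(M:ℝ)) ((M:ℝ) - 2*(N:ℝ)) (2*(N:ℝ) - (M:ℝ))) / (((k:ℝ) - ((M:ℝ) - (N:ℝ))) * (etaTriple p_d p_c p_cd 3 (-2) 2))) * ((k:ℝ) - ((M:ℝ) - (N:ℝ))) * (etaTriple p_d p_c p_cd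 1 0 0) := by
      simp only [etaTriple]; ring
    refine ⟨Set.mem_Icc.mpr ⟨hd0, hd1⟩, ?_, ?_⟩
    · simp only [hkiaTypeII]
      rw [hdiv]
      refine min_eq_of_eq ?_ ?_ <;>
      · field_simp
        simp only [etaTriple]
        ring
    · intro a ha
      rw [Set.mem_Icc] at ha
      obtain ⟨ha0, ha1⟩ := ha
      simp only [hkiaTypeII]
      rcases le_total a (((etaTriple p_d p_c p_cd (3*(N:ℝ) - 2*(M:ℝ)) ((M:ℝ) - 2*(N:ℝ)) (2*(N:ℝ) - (M:ℝ))) / (((k:ℝ) - ((M:ℝ) - (N:ℝ))) * (etaTriple p_d p_c p_cd 3 (-2) 2)))) with hcmp | hcmp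
      · have hint1 : (0:ℝ) ≤ (((etaTriple p_d p_c p_cd (3*(N:ℝ) - 2*(M:ℝ)) ((M:ℝ) - 2*(N:ℝ)) (2*(N:ℝ) - (M:ℝ))) / (((k:ℝ) - ((M:ℝ) - (N:ℝ))) * (etaTriple p_d p_c p_cd 3 (-2) 2))) - a) * ((k:ℝ) - ((M:ℝ) - (N:ℝ))) * (etaTriple p_d p_c p_cd 1 0 0) :=
          mul_nonneg (mul_nonneg (sub_nonneg.2 hcmp) hApos.le) hE40nn
        refine le_trans (min_le_right _ _) (le_min ?_ ?_)
        · simp only [etaTriple] at r1 hdA r2d hint1 ⊢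
          linarith [r1, hdA, r2d, hint1]
        · simp only [etaTriple] at hint1 ⊢
          linarith [hint1]
      · have hint2 : (0:ℝ) ≤ (a - ((etaTriple p_d p_c p_cd (3*(N:ℝ) - 2*(M:ℝ)) ((M:ℝ) - 2*(N:ℝ)) (2*(N:ℝ) - (M:ℝ))) / (((k:ℝ) - ((M:ℝ) - (N:ℝ))) * (etaTriple p_d p_c p_cd 3 (-2) 2)))) * ((k:ℝ) - ((M:ℝ) - (N:ℝ))) * (etaTriple p_d p_c p_cd 1 (-1) 1) :=
          mul_nonneg (mul_nonneg (sub_nonneg.2 hcmp) hApos.le) hE2nn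
        refine le_trans (min_le_left _ _) (le_min ?_ ?_)
        · simp only [etaTriple] at hint2 ⊢
          linarith [hint2]
        · simp only [etaTriple] at r1 hdA r2d hint2 ⊢
          linarith [r1, hdA, r2d, hint2]
  · intro hc
    have r2A : ((k:ℝ) - ((M:ℝ) - (N:ℝ))) * (etaTriple p_d p_c p_cd 3 (-2) 2) = 2 * (((k:ℝ) - ((M:ℝ) - (N:ℝ))) * (etaTriple p_d p_c p_cd 1 (-1) 1)) + ((k:ℝ) - ((M:ℝ) - (N:ℝ))) * (etaTriple p_d p_c p_cd 1 0 0) := by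
      simp only [etaTriple]; ring
    have hH1G1 : (etaTriple p_d p_c p_cd (2*(M:ℝ) - (N:ℝ)) (M:ℝ) (M:ℝ)) + 1 * ((k:ℝ) - ((M:ℝ) - (N:ℝ))) * (etaTriple p_d p_c p_cd 1 0 0)
        ≤ 2 * ((etaTriple p_d p_c p_cd (N:ℝ) ((M:ℝ) - (N:ℝ)) (N:ℝ)) - 1 * ((k:ℝ) - ((M:ℝ) - (N:ℝ))) * (etaTriple p_d p_c p_cd 1 (-1) 1)) := by
      have h := hkey
      have r1' := r1
      have r2A' := r2A
      simp only [etaTriple] at h r1' r2A' ⊢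
      linarith [h, hc, r1', r2A']
    refine ⟨?_, ?_⟩
    · simp only [hkiaTypeII]
      rw [min_eq_right hH1G1]
      simp only [etaTriple]; ring
    · intro a ha
      rw [Set.mem_Icc] at ha
      obtain ⟨ha0, ha1⟩ := ha
      simp only [hkiaTypeII]
      rw [min_eq_right hH1G1]
      refine le_trans (min_le_right _ _) ?_
      have hint : (0:ℝ) ≤ (1 - a) * ((k:ℝ) - ((M:ℝ) - (N:ℝ))) * (etaTriple p_d p_c p_cd 1 0 0) :=
        mul_nonneg (mul_nonneg (by linarith) hA0) hE40nn
      simp only [etaTriple] at hint ⊢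
      linarith [hint]
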